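/- arXiv:1011.4752 — 2 statements merged into one kernel-verified Lean document; each statement's English description precedes it below -/
import Mathlib

section
/- Let X_1,...,X_n be random variables taking values in [0,b] such that for every t, |E[X_t | X_1,...,X_{t-1}] - μ| ≤ C, where 0 < C < μ. Let S_n = X_1 + ... + X_n. Then for all a ≥ 0, P(S_n ≥ n(μ+C) + a) ≤ exp(-2(a(μ-C)/(b(μ+C)))²/n). -/
/-!
Chernoff's method. On `[0, b]` the chord of the convex function `x ↦ exp (t x)` gives
`exp (t x) ≤ 1 - x / b + (x / b) exp (t b)`, so given the past, `E[exp (t X_k)]` is at most the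
moment generating function `1 - p + p exp (t b)` of a Bernoulli variable with
`p = min (μ + C) b / b`. Peeling off one summand at a time bounds `E[exp (t S_n)]` by its `n`-th
power, which Hoeffding's lemma bounds by `exp (n (p t b + t² b² / 8))`. Markov's inequality at
`t = 4 a / (n b²)` gives `P(S_n ≥ n (μ + C) + a) ≤ exp (-2 a² / (n b²))`, and this is stronger than
the claim because `0 < (μ - C) / (μ + C) ≤ 1`.
-/

open MeasureTheory ProbabilityTheory Filter Real Finset

theorem one_sub_add_mul_exp_le {p : ℝ} (hp0 : 0 ≤ p) (hp1 : p ≤ 1) (t : ℝ) :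
    1 - p + p * exp t ≤ exp (p * t + t ^ 2 / 8) := by
  have hIcc : ∀ᵐ x ∂Ber((1 : ℝ), 0, ⟨p, hp0, hp1⟩), x - p ∈ Set.Icc (-p) (1 - p) := by
    rw [ae_iff]
    refine bernoulliMeasure_apply_of_notMem_of_notMem _ ?_ ?_ ?_
    · exact (measurableSet_Icc.preimage (measurable_id.sub_const p)).compl
    all_goals simp
  have hmean : ∫ x, x - p ∂Ber((1 : ℝ), 0, ⟨p, hp0, hp1⟩) = 0 := by
    simp [integral_bernoulliMeasure]; ring
  have hoeffding := (hasSubgaussianMGF_of_mem_Icc_of_integral_eq_zero (by fun_prop) hIcc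
    hmean).mgf_le t
  simp only [mgf, integral_bernoulliMeasure] at hoeffding
  norm_num at hoeffding
  calc 1 - p + p * exp t
      = exp (p * t) * (p * exp (t * (1 - p)) + (1 - p) * exp (-(t * p))) := by
        have h1 : exp (p * t) * exp (t * (1 - p)) = exp t := by rw [← exp_add]; ring_nf
        have h2 : exp (p * t) * exp (-(t * p)) = 1 := by rw [← exp_add, ← exp_zero]; ring_nf
        linear_combination (-p) * h1 + (p - 1) * h2
    _ ≤ exp (p * t) * exp (t ^ 2 / 8) := by
        refine mul_le_mul_of_nonneg_left (hoeffding.trans_eq ?_) (exp_pos _).le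
        ring_nf
    _ = exp (p * t + t ^ 2 / 8) := (exp_add _ _).symm

theorem one_le_one_sub_add_mul_exp {p s : ℝ} (hp : 0 ≤ p) (hs : 0 ≤ s) :
    1 ≤ 1 - p + p * exp s := by
  nlinarith [one_le_exp hs]

theorem exp_mul_le_of_mem_Icc {b x : ℝ} (hb : 0 < b) (hx : x ∈ Set.Icc 0 b) (t : ℝ) :
    exp (t * x) ≤ 1 + (exp (t * b) - 1) / b * x := by
  have hθ0 : 0 ≤ x / b := div_nonneg hx.1 hb.le
  have hθ1 : x / b ≤ 1 := (div_le_one hb).2 hx.2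
  have hconvex := convexOn_exp.2 (Set.mem_univ 0) (Set.mem_univ (t * b)) (sub_nonneg.2 hθ1) hθ0
    (by ring)
  simp only [smul_eq_mul, mul_zero, zero_add, exp_zero, mul_one] at hconvex
  rw [show x / b * (t * b) = t * x by field_simp] at hconvex
  exact hconvex.trans_eq (by ring)

section Conditional

variable {Ω : Type*} {m mΩ : MeasurableSpace Ω} {P : Measure Ω} [IsFiniteMeasure P]

theorem condExp_exp_mul_le (hm : m ≤ mΩ) {X : Ω → ℝ} {b q t : ℝ} (hb : 0 < b) (ht : 0 ≤ t)
    (hX : AEMeasurable X P) (hXb : ∀ᵐ ω ∂P, X ω ∈ Set.Icc 0 b)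
    (hq : P[X | m] ≤ᵐ[P] fun _ ↦ q) :
    P[fun ω ↦ exp (t * X ω) | m] ≤ᵐ[P] fun _ ↦ 1 - q / b + q / b * exp (t * b) := by
  set c := (exp (t * b) - 1) / b
  have hc : 0 ≤ c := div_nonneg (by simpa using mul_nonneg ht hb.le) hb.le
  have hXint : Integrable X P := .of_mem_Icc 0 b hX hXb
  have hchord : P[fun ω ↦ exp (t * X ω) | m] ≤ᵐ[P] P[fun ω ↦ 1 + c * X ω | m] :=
    condExp_mono (integrable_exp_mul_of_mem_Icc hX hXb) ((integrable_const 1).add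
      (hXint.const_mul c)) (hXb.mono fun ω hω ↦ exp_mul_le_of_mem_Icc hb hω t)
  have haffine : P[fun ω ↦ 1 + c * X ω | m] =ᵐ[P] fun ω ↦ 1 + c * P[X | m] ω := by
    refine (condExp_add (integrable_const 1) (hXint.smul c) m).trans ?_
    filter_upwards [condExp_smul (μ := P) c X m] with ω hω
    simp [condExp_const hm, hω]
  filter_upwards [hchord, haffine, hq] with ω hchord haffine hq
  calc P[fun ω ↦ exp (t * X ω) | m] ω ≤ 1 + c * P[X | m] ω := hchord.trans_eq haffine
    _ ≤ 1 + c * q := by gcongr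
    _ = 1 - q / b + q / b * exp (t * b) := by ring

theorem integral_mul_le_of_condExp_le (hm : m ≤ mΩ) {f g : Ω → ℝ} {B : ℝ}
    (hf : StronglyMeasurable[m] f) (hf0 : 0 ≤ᵐ[P] f) (hfint : Integrable f P)
    (hg : Integrable g P) (hfg : Integrable (f * g) P) (hgB : P[g | m] ≤ᵐ[P] fun _ ↦ B) :
    ∫ ω, f ω * g ω ∂P ≤ B * ∫ ω, f ω ∂P := by
  have hpull := condExp_mul_of_stronglyMeasurable_left hf hfg hg
  calc ∫ ω, f ω * g ω ∂P = ∫ ω, P[f * g | m] ω ∂P := (integral_condExp hm).symm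
    _ = ∫ ω, f ω * P[g | m] ω ∂P := integral_congr_ae hpull
    _ ≤ ∫ ω, f ω * B ∂P := by
        refine integral_mono_ae (integrable_condExp.congr hpull) (hfint.mul_const B) ?_
        filter_upwards [hf0, hgB] with ω hf0 hgB
        exact mul_le_mul_of_nonneg_left hgB hf0
    _ = B * ∫ ω, f ω ∂P := by rw [integral_mul_const, mul_comm]

end Conditional

section PartialSums

variable {Ω : Type*} {mΩ : MeasurableSpace Ω} {P : Measure Ω} {X : ℕ → Ω → ℝ} {b : ℝ} {n : ℕ}

theorem ae_sum_range_mem_Icc (hXb : ∀ k < n, ∀ᵐ ω ∂P, X k ω ∈ Set.Icc 0 b) :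
    ∀ᵐ ω ∂P, ∑ i ∈ range n, X i ω ∈ Set.Icc 0 (n * b) := by
  have hall : ∀ᵐ ω ∂P, ∀ k ∈ range n, X k ω ∈ Set.Icc 0 b :=
    (eventually_all_finset _).2 fun k hk ↦ hXb k (mem_range.1 hk)
  filter_upwards [hall] with ω hω
  refine ⟨sum_nonneg fun k hk ↦ (hω k hk).1, ?_⟩
  simpa using sum_le_card_nsmul _ _ _ fun k hk ↦ (hω k hk).2

theorem integrable_exp_mul_sum_range [IsFiniteMeasure P] (hX : ∀ k < n, AEMeasurable (X k) P)
    (hXb : ∀ k < n, ∀ᵐ ω ∂P, X k ω ∈ Set.Icc 0 b) (t : ℝ) :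
    Integrable (fun ω ↦ exp (t * ∑ i ∈ range n, X i ω)) P :=
  integrable_exp_mul_of_mem_Icc (Finset.aemeasurable_fun_sum _ fun k hk ↦ hX k (mem_range.1 hk))
    (ae_sum_range_mem_Icc hXb)

theorem integral_exp_mul_sum_range_le [IsProbabilityMeasure P] {ℱ : ℕ → MeasurableSpace Ω}
    (hℱ : ∀ k, ℱ k ≤ mΩ) (hadapted : ∀ i k, i < k → Measurable[ℱ k] (X i)) {q t : ℝ}
    (hb : 0 < b) (hq0 : 0 ≤ q) (ht : 0 ≤ t) (hXb : ∀ k < n, ∀ᵐ ω ∂P, X k ω ∈ Set.Icc 0 b)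
    (hq : ∀ k < n, P[X k | ℱ k] ≤ᵐ[P] fun _ ↦ q) :
    ∫ ω, exp (t * ∑ i ∈ range n, X i ω) ∂P ≤ (1 - q / b + q / b * exp (t * b)) ^ n := by
  have hX : ∀ k, Measurable (X k) := fun k ↦ (hadapted k (k + 1) k.lt_succ_self).mono (hℱ _) le_rfl
  induction n with
  | zero => simp
  | succ n ih =>
    have hexp : ∀ ω, exp (t * ∑ i ∈ range (n + 1), X i ω) =
        exp (t * ∑ i ∈ range n, X i ω) * exp (t * X n ω) := by
      intro ω; rw [sum_range_succ, mul_add, exp_add]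
    simp_rw [hexp]
    refine (integral_mul_le_of_condExp_le (hℱ n) ?_ (ae_of_all _ fun ω ↦ (exp_pos _).le)
      (integrable_exp_mul_sum_range (fun k _ ↦ (hX k).aemeasurable)
        (fun k hk ↦ hXb k (by omega)) t)
      (integrable_exp_mul_of_mem_Icc (hX n).aemeasurable (hXb n n.lt_succ_self)) ?_
      (condExp_exp_mul_le (hℱ n) hb ht (hX n).aemeasurable (hXb n n.lt_succ_self)
        (hq n n.lt_succ_self))).trans ?_
    · exact (measurable_exp.comp ((Finset.measurable_sum _ fun i hi ↦
        hadapted i n (mem_range.1 hi)).const_mul t)).stronglyMeasurable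
    · exact (integrable_exp_mul_sum_range (fun k _ ↦ (hX k).aemeasurable) hXb t).congr
        (ae_of_all _ hexp)
    · rw [pow_succ']
      exact mul_le_mul_of_nonneg_left (ih (fun k hk ↦ hXb k (by omega))
        (fun k hk ↦ hq k (by omega)))
        (zero_le_one.trans (one_le_one_sub_add_mul_exp (div_nonneg hq0 hb.le) (by positivity)))

theorem measureReal_mul_add_le_sum_range_le [IsProbabilityMeasure P] {ℱ : ℕ → MeasurableSpace Ω}
    (hℱ : ∀ k, ℱ k ≤ mΩ) (hadapted : ∀ i k, i < k → Measurable[ℱ k] (X i)) {q a : ℝ}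
    (hb : 0 < b) (hq0 : 0 ≤ q) (hqb : q ≤ b) (ha : 0 ≤ a)
    (hXb : ∀ k < n, ∀ᵐ ω ∂P, X k ω ∈ Set.Icc 0 b) (hq : ∀ k < n, P[X k | ℱ k] ≤ᵐ[P] fun _ ↦ q) :
    P.real {ω | n * q + a ≤ ∑ i ∈ range n, X i ω} ≤ exp (-2 * (a / b) ^ 2 / n) := by
  obtain rfl | hn := n.eq_zero_or_pos
  · simp
  have hX : ∀ k, Measurable (X k) := fun k ↦ (hadapted k (k + 1) k.lt_succ_self).mono (hℱ _) le_rfl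
  set t := 4 * a / (n * b ^ 2)
  set p := q / b
  have ht : 0 ≤ t := by positivity
  have hp0 : 0 ≤ p := div_nonneg hq0 hb.le
  calc P.real {ω | n * q + a ≤ ∑ i ∈ range n, X i ω}
      ≤ exp (-t * (n * q + a)) * mgf (fun ω ↦ ∑ i ∈ range n, X i ω) P t :=
        measure_ge_le_exp_mul_mgf _ ht
          (integrable_exp_mul_sum_range (fun k _ ↦ (hX k).aemeasurable) hXb t)
    _ ≤ exp (-t * (n * q + a)) * exp (p * (t * b) + (t * b) ^ 2 / 8) ^ n := by
        refine mul_le_mul_of_nonneg_left ?_ (exp_pos _).le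
        refine (integral_exp_mul_sum_range_le hℱ hadapted hb hq0 ht hXb hq).trans ?_
        exact pow_le_pow_left₀ (zero_le_one.trans (one_le_one_sub_add_mul_exp hp0
          (by positivity))) (one_sub_add_mul_exp_le hp0 ((div_le_one hb).2 hqb) _) n
    _ = exp (-2 * (a / b) ^ 2 / n) := by
        rw [← exp_nat_mul, ← exp_add]
        congr 1
        simp only [t, p]
        field_simp
        ring

end PartialSums

theorem drifted_chernoff_upper_general
    {Ω : Type*} [MeasurableSpace Ω] (P : Measure Ω) [IsProbabilityMeasure P]
    (n : ℕ) (X : ℕ → Ω → ℝ) (b μ C : ℝ) (hb : 0 < b)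
    (hmeas : ∀ t, Measurable (X t))
    (hbound : ∀ t, ∀ᵐ ω ∂P, X t ω ∈ Set.Icc 0 b)
    (hC : 0 < C) (hCμ : C < μ)
    (hcond : ∀ t, t < n → ∀ᵐ ω ∂P,
      |(P[X t | ⨆ i ∈ Finset.range t, MeasurableSpace.comap (X i) inferInstance]) ω - μ| ≤ C)
    (a : ℝ) (ha : 0 ≤ a) :
    (P {ω | (n : ℝ) * (μ + C) + a ≤ ∑ t ∈ Finset.range n, X t ω}).toReal ≤
      Real.exp (-2 * ((a * (μ - C)) / (b * (μ + C)))^2 / n) := by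
  set ℱ : ℕ → MeasurableSpace Ω :=
    fun t ↦ ⨆ i ∈ range t, MeasurableSpace.comap (X i) inferInstance
  have hℱ : ∀ t, ℱ t ≤ ‹_› := fun t ↦ iSup₂_le fun i _ ↦ (hmeas i).comap_le
  have hadapted : ∀ i t, i < t → Measurable[ℱ t] (X i) := fun i t hit ↦
    (comap_measurable (X i)).mono (le_iSup₂ (f := fun i (_ : i ∈ range t) ↦
      MeasurableSpace.comap (X i) inferInstance) i (mem_range.2 hit)) le_rfl
  have hq : ∀ t < n, P[X t | ℱ t] ≤ᵐ[P] fun _ ↦ min (μ + C) b := by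
    intro t ht
    have hbdd := ae_bdd_abs_condExp_of_ae_bdd_abs (m := ℱ t) (R := b)
      ((hbound t).mono fun ω hω ↦ abs_le.2 ⟨by linarith [hω.1], hω.2⟩)
    filter_upwards [hcond t ht, hbdd] with ω hdrift hbdd
    exact le_min (by linarith [(abs_le.1 hdrift).2]) (abs_le.1 hbdd).2
  have hratio : a * (μ - C) / (b * (μ + C)) ≤ a / b := by
    rw [mul_div_mul_comm]
    exact mul_le_of_le_one_right (div_nonneg ha hb.le) ((div_le_one (by linarith)).2 (by linarith))
  calc (P {ω | (n : ℝ) * (μ + C) + a ≤ ∑ t ∈ range n, X t ω}).toReal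
      ≤ P.real {ω | n * min (μ + C) b + a ≤ ∑ t ∈ range n, X t ω} :=
        measureReal_mono fun ω hω ↦ le_trans (add_le_add_left
          (mul_le_mul_of_nonneg_left (min_le_left _ _) n.cast_nonneg) a) hω
    _ ≤ exp (-2 * (a / b) ^ 2 / n) :=
        measureReal_mul_add_le_sum_range_le hℱ hadapted hb (le_min (by linarith) hb.le)
          (min_le_right _ _) ha (fun k _ ↦ hbound k) hq
    _ ≤ exp (-2 * (a * (μ - C) / (b * (μ + C))) ^ 2 / n) := by
        simp only [neg_mul, neg_div, exp_le_exp, neg_le_neg_iff]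
        gcongr
        exact div_nonneg (mul_nonneg ha (by linarith)) (mul_pos hb (by linarith)).le

/-- Drifted Chernoff–Hoeffding upper tail: if `X 1, ..., X n` take values in `[0,b]` and the
conditional expectation of each given the past is within `C` of `μ` (`0 < C < μ`), then for
`a ≥ 0`, `P(S_n ≥ n(μ+C) + a) ≤ exp(-2(a(μ-C)/(b(μ+C)))²/n)`. -/
theorem drifted_chernoff_upper
    {Ω : Type*} [MeasurableSpace Ω] (P : Measure Ω) [IsProbabilityMeasure P]
    (n : ℕ) (hn : 1 ≤ n) (X : ℕ → Ω → ℝ) (b μ C : ℝ) (hb : 0 < b)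
    (hmeas : ∀ t, Measurable (X t))
    (hbound : ∀ t, ∀ᵐ ω ∂P, X t ω ∈ Set.Icc 0 b)
    (hC : 0 < C) (hCμ : C < μ)
    (hcond : ∀ t, t < n → ∀ᵐ ω ∂P,
      |(P[X t | ⨆ i ∈ Finset.range t, MeasurableSpace.comap (X i) inferInstance]) ω - μ| ≤ C)
    (a : ℝ) (ha : 0 ≤ a) :
    (P {ω | (n : ℝ) * (μ + C) + a ≤ ∑ t ∈ Finset.range n, X t ω}).toReal ≤
      Real.exp (-2 * ((a * (μ - C)) / (b * (μ + C)))^2 / n) :=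
  drifted_chernoff_upper_general P n X b μ C hb hmeas hbound hC hCμ hcond a ha
end

section
/- Let (K_i) be non-decreasing positive integers with K_i → ∞, and let α be a positive integer. Define γ = ⌈max{5α+1, e^{4α/3}}⌉. In the UCB meta-policy where at each round the policy maximizing X̂_j/i_j + √(3 ln n / i_j) is selected, after the round index i exceeds γ (i.e., when G(n) > K_γ), each of the two policies has been selected at least α times. -/
/-!
By induction on `c`: once `k ≥ ucbThreshold c`, arm `j` has been sampled at least `c` times.
If at a round `m ≥ ucbThreshold c` arm `j` still has only `c` samples, then the other arm has at
least `4 c` (as `m ≥ 5 c + 1`) and `log (time m) > 4 c / 3` (as `m ≥ exp (4 c / 3)`). So the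
exploration bonus `t = √(3 log n / c)` of arm `j` exceeds `2`, while the index of the other arm
is at most `1 + t / 2 < t`, and the rule is forced to select `j`.
-/

open Real

noncomputable def ucbIndex (n s : ℕ) (x : ℝ) : ℝ := x / s + √(3 * log n / s)

noncomputable def ucbThreshold (c : ℕ) : ℕ := max (5 * c + 1) ⌈exp (4 * c / 3)⌉₊

theorem Fin.two_eq_or_eq_of_ne {a b : Fin 2} (hab : a ≠ b) (c : Fin 2) : c = a ∨ c = b := by
  revert a b c; decide

theorem Nat.count_add_count_of_ne {sel : ℕ → Fin 2} {a b : Fin 2} (hab : a ≠ b) (n : ℕ) :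
    Nat.count (sel · = a) n + Nat.count (sel · = b) n = n := by
  induction n with
  | zero => simp
  | succ n ih =>
    simp only [Nat.count_succ]
    rcases Fin.two_eq_or_eq_of_ne hab (sel n) with h | h <;> simp [h, hab, hab.symm] <;> omega

theorem ucbIndex_lt_ucbIndex {n s s' : ℕ} {x y : ℝ} (hs : 0 < s) (hss' : 4 * s ≤ s')
    (hn : exp (4 * s / 3) < n) (hx : 0 ≤ x) (hy : y ≤ s') :
    ucbIndex n s' y < ucbIndex n s x := by
  have hsR : (0 : ℝ) < s := by exact_mod_cast hs
  have hss'R : 4 * (s : ℝ) ≤ s' := by exact_mod_cast hss'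
  have hlog : 4 * s / 3 < log n := (lt_log_iff_exp_lt (by linarith [exp_pos (4 * s / 3)])).2 hn
  set t := √(3 * log n / s)
  have ht_sq : t ^ 2 = 3 * log n / s := sq_sqrt (by positivity)
  have ht : 2 < t := (lt_sqrt (by norm_num)).2 (by rw [lt_div_iff₀ hsR]; linarith)
  have hbonus : √(3 * log n / s') ≤ t / 2 := by
    rw [sqrt_le_left (by linarith), div_pow, ht_sq, div_div]
    exact div_le_div_of_nonneg_left (by linarith) (by positivity) (by linarith)
  have hmean : y / s' ≤ 1 := div_le_one_of_le₀ hy (by positivity)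
  have hmean' : 0 ≤ x / s := by positivity
  unfold ucbIndex
  linarith

theorem ucbThreshold_lt_succ (c : ℕ) : ucbThreshold c < ucbThreshold (c + 1) := by
  have hexp : exp (4 * c / 3) + 1 ≤ exp (4 * ↑(c + 1) / 3) := by
    have h1 : 1 ≤ exp (4 * c / 3) := one_le_exp (by positivity)
    have h2 : 4 / 3 + 1 ≤ exp (4 / 3) := add_one_le_exp _
    rw [show 4 * ((c + 1 : ℕ) : ℝ) / 3 = 4 * c / 3 + 4 / 3 by push_cast; ring, exp_add]
    nlinarith
  have hceil : ⌈exp (4 * c / 3)⌉₊ + 1 ≤ ⌈exp (4 * ↑(c + 1) / 3)⌉₊ :=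
    Nat.ceil_add_one (exp_pos _).le ▸ Nat.ceil_le_ceil hexp
  unfold ucbThreshold
  omega

theorem exp_le_of_ucbThreshold_le {c k : ℕ} (h : ucbThreshold c ≤ k) : exp (4 * c / 3) ≤ k :=
  (Nat.le_ceil _).trans (by exact_mod_cast (le_max_right _ _).trans h)

section UCBRun

variable {sel : ℕ → Fin 2} {cnt : Fin 2 → ℕ → ℕ} {time : ℕ → ℕ} {Xhat : Fin 2 → ℕ → ℝ}

theorem sel_eq_of_cnt_lagging
    (hcnt : ∀ j i, cnt j i = 1 + Nat.count (sel · = j) i) (htime : ∀ i, i + 2 ≤ time i)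
    (hXhat : ∀ j i, 0 ≤ Xhat j i ∧ Xhat j i ≤ cnt j i)
    (hrule : ∀ i j, ucbIndex (time i) (cnt j i) (Xhat j i) ≤
      ucbIndex (time i) (cnt (sel i) i) (Xhat (sel i) i))
    {m : ℕ} {j : Fin 2} (h5 : 5 * cnt j m ≤ m + 2) (hexp : exp (4 * cnt j m / 3) < m + 2) :
    sel m = j := by
  by_contra hne
  have hsum := Nat.count_add_count_of_ne (sel := sel) (Ne.symm hne) m
  have hlag : 4 * cnt j m ≤ cnt (sel m) m := by rw [hcnt, hcnt] at *; omega
  have htime_m : exp (4 * cnt j m / 3) < time m :=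
    hexp.trans_le (by exact_mod_cast htime m)
  exact (hrule m j).not_gt <| ucbIndex_lt_ucbIndex (by rw [hcnt]; omega) hlag htime_m
    (hXhat j m).1 (hXhat (sel m) m).2

theorem le_cnt_of_ucbThreshold_le
    (hcnt : ∀ j i, cnt j i = 1 + Nat.count (sel · = j) i) (htime : ∀ i, i + 2 ≤ time i)
    (hXhat : ∀ j i, 0 ≤ Xhat j i ∧ Xhat j i ≤ cnt j i)
    (hrule : ∀ i j, ucbIndex (time i) (cnt j i) (Xhat j i) ≤
      ucbIndex (time i) (cnt (sel i) i) (Xhat (sel i) i))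
    (j : Fin 2) {c k : ℕ} (hk : ucbThreshold c ≤ k) : c ≤ cnt j k := by
  induction c generalizing k with
  | zero => exact Nat.zero_le _
  | succ c ih =>
    obtain ⟨m, rfl, hm⟩ : ∃ m, k = m + 1 ∧ ucbThreshold c ≤ m :=
      ⟨k - 1, by have := ucbThreshold_lt_succ c; omega⟩
    have hstep : cnt j (m + 1) = cnt j m + if sel m = j then 1 else 0 := by
      rw [hcnt, hcnt, Nat.count_succ]; ring
    rcases (ih hm).lt_or_eq with hlt | heq
    · split_ifs at hstep <;> omega
    · have h5 : 5 * c + 1 ≤ m := (le_max_left _ _).trans hm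
      have hexp : exp (4 * c / 3) < m + 2 := by
        linarith [exp_le_of_ucbThreshold_le hm]
      subst heq
      rw [hstep, if_pos (sel_eq_of_cnt_lagging hcnt htime hXhat hrule (by omega) hexp)]

end UCBRun

theorem ucb_samples_each_arm_general
    (K : ℕ → ℕ) (hKpos : ∀ i, 1 ≤ K i)
    (α : ℕ)
    (γ : ℕ) (hγ : γ = max (5 * α + 1) ⌈Real.exp (4 * α / 3)⌉₊)
    (sel : ℕ → Fin 2)
    (cnt : Fin 2 → ℕ → ℕ)
    (hcnt : ∀ j i, cnt j i = 1 + ((Finset.range i).filter (fun k => sel k = j)).card)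
    (time : ℕ → ℕ)
    (htime : ∀ i, time i = ∑ k ∈ Finset.range (i + 2), K k)
    (Xhat : Fin 2 → ℕ → ℝ)
    (hXhat : ∀ j i, 0 ≤ Xhat j i ∧ Xhat j i ≤ cnt j i)
    (hrule : ∀ i j,
      Xhat j i / cnt j i + Real.sqrt (3 * Real.log (time i) / cnt j i) ≤
        Xhat (sel i) i / cnt (sel i) i +
          Real.sqrt (3 * Real.log (time i) / cnt (sel i) i)) :
    ∀ i, γ < i → ∀ j, α ≤ cnt j i := by
  have hcnt' : ∀ j i, cnt j i = 1 + Nat.count (sel · = j) i := fun j i => by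
    rw [hcnt, Nat.count_eq_card_filter_range]
  have htime' : ∀ i, i + 2 ≤ time i := fun i => by
    simpa [htime] using Finset.card_nsmul_le_sum (Finset.range (i + 2)) K 1 fun k _ => hKpos k
  intro i hi j
  exact le_cnt_of_ucbThreshold_le hcnt' htime' hXhat hrule j (hγ.symm.trans_le hi.le)

/-- UCB-type index rules eventually sample each arm: in the two-policy meta-algorithm where at
each round of the main loop the policy maximizing `X̂_j/i_j + √(3 ln n / i_j)` is selected,
once the round index exceeds `γ = ⌈max{5α+1, e^{4α/3}}⌉`, each policy has been selected at
least `α` times. Here `cnt j i` counts selections of policy `j` in the first `i` loop rounds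
(plus the one initialization play), `time i` is the total elapsed time after `i` loop rounds,
and `X̂ j i` is the accumulated sum of block sample means of policy `j` (rewards in `[0,1]`,
so `0 ≤ X̂ j i ≤ cnt j i`). -/
theorem ucb_samples_each_arm
    (K : ℕ → ℕ) (hKpos : ∀ i, 1 ≤ K i) (hKmono : Monotone K)
    (hKdiv : Filter.Tendsto K Filter.atTop Filter.atTop)
    (α : ℕ) (hα : 1 ≤ α)
    (γ : ℕ) (hγ : γ = max (5 * α + 1) ⌈Real.exp (4 * α / 3)⌉₊)
    (sel : ℕ → Fin 2)
    (cnt : Fin 2 → ℕ → ℕ)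
    (hcnt : ∀ j i, cnt j i = 1 + ((Finset.range i).filter (fun k => sel k = j)).card)
    (time : ℕ → ℕ)
    (htime : ∀ i, time i = ∑ k ∈ Finset.range (i + 2), K k)
    (Xhat : Fin 2 → ℕ → ℝ)
    (hXhat : ∀ j i, 0 ≤ Xhat j i ∧ Xhat j i ≤ cnt j i)
    (hrule : ∀ i j,
      Xhat j i / cnt j i + Real.sqrt (3 * Real.log (time i) / cnt j i) ≤
        Xhat (sel i) i / cnt (sel i) i +
          Real.sqrt (3 * Real.log (time i) / cnt (sel i) i)) :
    ∀ i, γ < i → ∀ j, α ≤ cnt j i :=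
  ucb_samples_each_arm_general K hKpos α γ hγ sel cnt hcnt time htime Xhat hXhat hrule
end
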